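/- arXiv:1502.05016 — 8 statements merged into one kernel-verified Lean document; each statement's English description precedes it below -/
import Mathlib

section
/- Let g be a Lie algebra over a field of characteristic 0. If the Lie bracket satisfies the five cubic associativity relations (those obtained from the edges of the Stasheff pentagon: ((xy)z)t = (x(yz))t, (x(yz))t = x((yz)t), x((yz)t) = x(y(zt)), x(y(zt)) = (xy)(zt), (xy)(zt) = ((xy)z)t, where xy denotes [x,y]), then g is 3-step nilpotent, i.e., [[[x,y],z],t] = 0 for all x,y,z,t. Conversely, if g is 3-step nilpotent then all five relations hold. -/
/-- A Lie algebra satisfies the five cubic associativity relations (edges of the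
Stasheff pentagon, with xy = [x,y]) iff it is 3-step nilpotent. -/
theorem stmt_3 (K : Type*) (L : Type*) [Field K] [CharZero K]
    [LieRing L] [LieAlgebra K L] :
    ((∀ x y z t : L, ⁅⁅⁅x, y⁆, z⁆, t⁆ = ⁅⁅x, ⁅y, z⁆⁆, t⁆) ∧
     (∀ x y z t : L, ⁅⁅x, ⁅y, z⁆⁆, t⁆ = ⁅x, ⁅⁅y, z⁆, t⁆⁆) ∧
     (∀ x y z t : L, ⁅x, ⁅⁅y, z⁆, t⁆⁆ = ⁅x, ⁅y, ⁅z, t⁆⁆⁆) ∧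
     (∀ x y z t : L, ⁅x, ⁅y, ⁅z, t⁆⁆⁆ = ⁅⁅x, y⁆, ⁅z, t⁆⁆) ∧
     (∀ x y z t : L, ⁅⁅x, y⁆, ⁅z, t⁆⁆ = ⁅⁅⁅x, y⁆, z⁆, t⁆))
      ↔ (∀ x y z t : L, ⁅⁅⁅x, y⁆, z⁆, t⁆ = 0) := by
  constructor
  · rintro ⟨h1, -, -, -, -⟩
    -- The first relation alone forces 3-step nilpotency.
    have A : ∀ a b c t : L, ⁅⁅a, ⁅b, c⁆⁆, t⁆ = 0 := by
      intro a b c t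
      have h := h1 b a c t
      rw [show (⁅⁅b, a⁆, c⁆ : L) = ⁅b, ⁅a, c⁆⁆ - ⁅a, ⁅b, c⁆⁆ from lie_lie b a c,
        sub_lie] at h
      exact sub_eq_self.mp h
    intro x y z t
    rw [show (⁅⁅x, y⁆, z⁆ : L) = ⁅x, ⁅y, z⁆⁆ - ⁅y, ⁅x, z⁆⁆ from lie_lie x y z,
      sub_lie, A, A, sub_zero]
  · intro h
    have A : ∀ a b c t : L, ⁅⁅a, ⁅b, c⁆⁆, t⁆ = 0 := by
      intro a b c t
      rw [← lie_skew a ⁅b, c⁆, neg_lie, h, neg_zero]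
    have B : ∀ a b c t : L, ⁅t, ⁅⁅a, b⁆, c⁆⁆ = 0 := by
      intro a b c t
      rw [← lie_skew t ⁅⁅a, b⁆, c⁆, h, neg_zero]
    have C : ∀ a b c t : L, ⁅t, ⁅a, ⁅b, c⁆⁆⁆ = 0 := by
      intro a b c t
      rw [← lie_skew t ⁅a, ⁅b, c⁆⁆, A, neg_zero]
    have D : ∀ a b c d : L, ⁅⁅a, b⁆, ⁅c, d⁆⁆ = 0 := by
      intro a b c d
      rw [leibniz_lie, h, B, zero_add]
    exact ⟨fun x y z t => by rw [h, A],
           fun x y z t => by rw [A, B],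
           fun x y z t => by rw [B, C],
           fun x y z t => by rw [C, D],
           fun x y z t => by rw [D, h]⟩
end

section
/- Let g be a Lie algebra over a field of characteristic 0 whose bracket satisfies [[[x,y],z],t] = [[x,[y,z]],t] for all x,y,z,t (the first cubic associativity relation). Then [[[x,y],z],t] = 0 for all x,y,z,t, i.e., g is 3-step nilpotent. -/
/-- If the bracket of a Lie algebra satisfies the first cubic associativity
relation [[[x,y],z],t] = [[x,[y,z]],t], then the Lie algebra is 3-step
nilpotent. -/
theorem stmt_4 (K : Type*) (L : Type*) [Field K] [CharZero K]
    [LieRing L] [LieAlgebra K L]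
    (h : ∀ x y z t : L, ⁅⁅⁅x, y⁆, z⁆, t⁆ = ⁅⁅x, ⁅y, z⁆⁆, t⁆) :
    ∀ x y z t : L, ⁅⁅⁅x, y⁆, z⁆, t⁆ = 0 := by
  have key : ∀ a b c t : L, ⁅⁅a, ⁅b, c⁆⁆, t⁆ = 0 := by
    intro a b c t
    have := h b a c t
    rw [lie_lie b a c, sub_lie] at this
    exact sub_eq_self.mp this
  intro x y z t
  rw [h, key]
end

section
/- Let g be a Lie algebra over a field of characteristic 0 and define the triple product T(x,y,z) = [[x,y],z]. If T is totally associative as a ternary product, i.e., T(T(x,y,z),t,u) = T(x,T(y,z,t),u) = T(x,y,T(z,t,u)) for all x,y,z,t,u, then T(T(x,y,z),t,u) = 0 for all x,y,z,t,u; in other words g is 4-step nilpotent. -/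
/-- If the Lie triple product T(x,y,z) = [[x,y],z] is totally associative as a
ternary product, then T(T(x,y,z),t,u) = 0, i.e. the Lie algebra is 4-step
nilpotent. -/
theorem stmt_5 (K : Type*) (L : Type*) [Field K] [CharZero K]
    [LieRing L] [LieAlgebra K L]
    (h1 : ∀ x y z t u : L, ⁅⁅⁅⁅x, y⁆, z⁆, t⁆, u⁆ = ⁅⁅x, ⁅⁅y, z⁆, t⁆⁆, u⁆)
    (h2 : ∀ x y z t u : L, ⁅⁅x, ⁅⁅y, z⁆, t⁆⁆, u⁆ = ⁅⁅x, y⁆, ⁅⁅z, t⁆, u⁆⁆) :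
    ∀ x y z t u : L, ⁅⁅⁅⁅x, y⁆, z⁆, t⁆, u⁆ = 0 := by
  intro x y z t u
  -- antisymmetry in arguments 2 and 3
  have s23 : ∀ a b c d e : L, ⁅⁅⁅⁅a, b⁆, c⁆, d⁆, e⁆ = -⁅⁅⁅⁅a, c⁆, b⁆, d⁆, e⁆ := by
    intro a b c d e
    rw [h1 a b c d e, h1 a c b d e]
    have hcb : ⁅c, b⁆ = -⁅b, c⁆ := (lie_skew c b).symm
    rw [hcb, neg_lie, lie_neg, neg_lie, neg_neg]
  -- antisymmetry in arguments 1 and 2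
  have s12 : ∀ a b c d e : L, ⁅⁅⁅⁅a, b⁆, c⁆, d⁆, e⁆ = -⁅⁅⁅⁅b, a⁆, c⁆, d⁆, e⁆ := by
    intro a b c d e
    have hba : ⁅b, a⁆ = -⁅a, b⁆ := (lie_skew b a).symm
    rw [hba, neg_lie, neg_lie, neg_lie, neg_neg]
  -- cyclic invariance in first three arguments
  have cyc : ∀ a b c d e : L, ⁅⁅⁅⁅a, b⁆, c⁆, d⁆, e⁆ = ⁅⁅⁅⁅b, c⁆, a⁆, d⁆, e⁆ := by
    intro a b c d e
    rw [s23 b c a d e, s12 b a c d e, neg_neg]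
  -- Jacobi identity
  have jac : ⁅⁅x, y⁆, z⁆ + ⁅⁅y, z⁆, x⁆ + ⁅⁅z, x⁆, y⁆ = 0 := by
    simp only [lie_lie]
    rw [← lie_skew x z, ← lie_skew y x, ← lie_skew z y]
    simp only [lie_neg]
    abel_nf
    rw [show (2:ℤ) • ⁅x, ⁅y, z⁆⁆ + ((2:ℤ) • ⁅y, ⁅z, x⁆⁆ + (2:ℤ) • ⁅z, ⁅x, y⁆⁆)
        = (2:ℤ) • (⁅x, ⁅y, z⁆⁆ + ⁅y, ⁅z, x⁆⁆ + ⁅z, ⁅x, y⁆⁆) by module, lie_jacobi, smul_zero]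
  have key : ⁅⁅⁅⁅x, y⁆, z⁆, t⁆, u⁆ + ⁅⁅⁅⁅y, z⁆, x⁆, t⁆, u⁆ + ⁅⁅⁅⁅z, x⁆, y⁆, t⁆, u⁆ = 0 := by
    rw [← add_lie, ← add_lie, ← add_lie, ← add_lie, jac]
    simp
  rw [← cyc x y z t u, cyc z x y t u] at key
  -- now key : F + F + F = 0
  have h3 : (3 : K) • ⁅⁅⁅⁅x, y⁆, z⁆, t⁆, u⁆ = 0 := by
    have : ((3 : ℕ) : K) • ⁅⁅⁅⁅x, y⁆, z⁆, t⁆, u⁆ = (3 : ℕ) • ⁅⁅⁅⁅x, y⁆, z⁆, t⁆, u⁆ :=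
      Nat.cast_smul_eq_nsmul K 3 _
    rw [show ((3:K)) = ((3:ℕ):K) by norm_num, this]
    rw [show (3 : ℕ) • ⁅⁅⁅⁅x, y⁆, z⁆, t⁆, u⁆ = ⁅⁅⁅⁅x, y⁆, z⁆, t⁆, u⁆ + ⁅⁅⁅⁅x, y⁆, z⁆, t⁆, u⁆ + ⁅⁅⁅⁅x, y⁆, z⁆, t⁆, u⁆ by module]
    exact key
  have := smul_eq_zero.mp h3
  rcases this with h | h
  · exact absurd h (by norm_num)
  · exact h
end

section
/- Every 2-step nilpotent Lie algebra of dimension 2p+1 over a field of characteristic 0 with characteristic sequence (2,...,2,1) (p twos) admits a basis {X_1,...,X_{2p+1}} in which the only possibly nonzero brackets are [X_1, X_{2i}] = X_{2i+1} for 1 ≤ i ≤ p and [X_{2i}, X_{2j}] = Σ_{k=1}^{p} a_{2i,2j}^{2k+1} X_{2k+1} for 1 ≤ i < j ≤ p, for some scalars a_{2i,2j}^{2k+1}. -/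
/-!
Let `ad x` have rank `p`. As `L` is 2-step nilpotent, `range (ad x)` is central, so it lies in
`ker (ad x)` and does not contain `x` (which is not central since `p ≥ 1`); by rank–nullity,
`ker (ad x) = range (ad x) ⊕ K x`. Take a family `Z` spanning `range (ad x)` and preimages `Y`
with `⁅x, Y i⁆ = Z i`. Every vector is a combination of the `Y i` modulo `ker (ad x)`, so the
`2p + 1` vectors `x, Y, Z` span `L` and form a basis. Finally `⁅Y i, Y j⁆` is central, and a
central element of `ker (ad x)` has no `x`-component, so it lies in `range (ad x)`.
-/

open Module Submodule LinearMap

theorem LinearMap.eq_top_of_ker_le_of_range_le_map {R M N : Type*} [Ring R] [AddCommGroup M]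
    [AddCommGroup N] [Module R M] [Module R N] {f : M →ₗ[R] N} {S : Submodule R M}
    (hker : ker f ≤ S) (hrange : range f ≤ S.map f) : S = ⊤ := by
  rw [range_eq_map, LinearMap.map_le_map_iff, sup_eq_left.2 hker] at hrange
  exact top_unique hrange

theorem Submodule.exists_fin_span_range_eq {K V : Type*} [DivisionRing K] [AddCommGroup V]
    [Module K V] {S : Submodule K V} [Module.Finite K S] {n : ℕ} (h : finrank K S = n) :
    ∃ Z : Fin n → V, span K (Set.range Z) = S := by
  let b := finBasisOfFinrankEq K S h
  refine ⟨S.subtype ∘ b, ?_⟩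
  rw [Set.range_comp, ← Submodule.map_span, b.span_eq, map_subtype_top]

section Interleave

variable {M : Type*} {p : ℕ}

def interleaveFamily (x : M) (Y Z : Fin p → M) (n : Fin (2 * p + 1)) : M :=
  if h0 : n.1 = 0 then x
  else if h : n.1 % 2 = 1 then Y ⟨n.1 / 2, by have := n.2; omega⟩
  else Z ⟨n.1 / 2 - 1, by have := n.2; omega⟩

variable (x : M) (Y Z : Fin p → M)

@[simp]
theorem interleaveFamily_zero (h : 0 < 2 * p + 1) : interleaveFamily x Y Z ⟨0, h⟩ = x := by
  simp [interleaveFamily]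

@[simp]
theorem interleaveFamily_odd (i : Fin p) (h : 2 * i.1 + 1 < 2 * p + 1) :
    interleaveFamily x Y Z ⟨2 * i.1 + 1, h⟩ = Y i := by
  dsimp only [interleaveFamily]
  rw [dif_neg (by omega), dif_pos (by omega)]
  congr; omega

@[simp]
theorem interleaveFamily_even (i : Fin p) (h : 2 * i.1 + 2 < 2 * p + 1) :
    interleaveFamily x Y Z ⟨2 * i.1 + 2, h⟩ = Z i := by
  dsimp only [interleaveFamily]
  rw [dif_neg (by omega), dif_neg (by omega)]
  congr; omega

theorem top_le_span_range_interleaveFamily {R : Type*} [Ring R] [AddCommGroup M] [Module R M]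
    {f : M →ₗ[R] M} (hker : ker f ≤ span R (Set.range Z) ⊔ R ∙ x)
    (hrange : range f ≤ span R (Set.range Z)) (hY : ∀ k, f (Y k) = Z k) :
    ⊤ ≤ span R (Set.range (interleaveFamily x Y Z)) := by
  set S := span R (Set.range (interleaveFamily x Y Z))
  have hx : x ∈ S := subset_span ⟨⟨0, by omega⟩, interleaveFamily_zero x Y Z _⟩
  have hYS : span R (Set.range Y) ≤ S := span_mono <| by
    rintro _ ⟨k, rfl⟩; exact ⟨_, interleaveFamily_odd x Y Z k (by omega)⟩
  have hZS : span R (Set.range Z) ≤ S := span_mono <| by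
    rintro _ ⟨k, rfl⟩; exact ⟨_, interleaveFamily_even x Y Z k (by omega)⟩
  refine (eq_top_of_ker_le_of_range_le_map
    (hker.trans (sup_le hZS ((span_singleton_le_iff_mem _ _).2 hx))) ?_).ge
  calc range f ≤ span R (Set.range Z) := hrange
    _ = (span R (Set.range Y)).map f := by
      rw [Submodule.map_span, ← Set.range_comp, show ⇑f ∘ Y = Z from funext hY]
    _ ≤ S.map f := map_mono hYS

end Interleave

section TwoStep

variable {R K L : Type*} [LieRing L]

theorem lie_eq_zero_of_mem_range_ad [CommRing R] [LieAlgebra R L]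
    (h2 : ∀ x y z : L, ⁅⁅x, y⁆, z⁆ = 0) {x r : L} (hr : r ∈ range (LieAlgebra.ad R L x))
    (z : L) : ⁅r, z⁆ = 0 := by
  obtain ⟨y, rfl⟩ := hr
  exact h2 x y z

theorem range_ad_le_ker_ad [CommRing R] [LieAlgebra R L] (h2 : ∀ x y z : L, ⁅⁅x, y⁆, z⁆ = 0)
    (x : L) : range (LieAlgebra.ad R L x) ≤ ker (LieAlgebra.ad R L x) := fun r hr => by
  rw [mem_ker, LieAlgebra.ad_apply, ← lie_skew, lie_eq_zero_of_mem_range_ad h2 hr, neg_zero]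

theorem notMem_range_ad_self [CommRing R] [LieAlgebra R L] (h2 : ∀ x y z : L, ⁅⁅x, y⁆, z⁆ = 0)
    {x : L} (hx : LieAlgebra.ad R L x ≠ 0) : x ∉ range (LieAlgebra.ad R L x) := fun hmem =>
  hx <| LinearMap.ext fun z => lie_eq_zero_of_mem_range_ad h2 hmem z

theorem ker_ad_eq_range_sup_span [Field K] [LieAlgebra K L] [FiniteDimensional K L]
    (h2 : ∀ x y z : L, ⁅⁅x, y⁆, z⁆ = 0) {x : L} (hx : LieAlgebra.ad K L x ≠ 0)
    (hdim : finrank K (ker (LieAlgebra.ad K L x)) = finrank K (range (LieAlgebra.ad K L x)) + 1) :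
    ker (LieAlgebra.ad K L x) = range (LieAlgebra.ad K L x) ⊔ K ∙ x := by
  refine (eq_of_le_of_finrank_eq (sup_le (range_ad_le_ker_ad h2 x) ?_) ?_).symm
  · rw [span_singleton_le_iff_mem, mem_ker, LieAlgebra.ad_apply, lie_self]
  · rw [finrank_sup_span_singleton (notMem_range_ad_self h2 hx), hdim]

theorem mem_range_ad_of_forall_lie_eq_zero [Field K] [LieAlgebra K L]
    (h2 : ∀ x y z : L, ⁅⁅x, y⁆, z⁆ = 0) {x : L} (hx : LieAlgebra.ad K L x ≠ 0)
    (hker : ker (LieAlgebra.ad K L x) ≤ range (LieAlgebra.ad K L x) ⊔ K ∙ x) {c : L}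
    (hc : ∀ z : L, ⁅c, z⁆ = 0) : c ∈ range (LieAlgebra.ad K L x) := by
  have hcker : c ∈ ker (LieAlgebra.ad K L x) := by
    rw [mem_ker, LieAlgebra.ad_apply, ← lie_skew, hc, neg_zero]
  obtain ⟨r, hr, _, hs, rfl⟩ := mem_sup.1 (hker hcker)
  obtain ⟨t, rfl⟩ := mem_span_singleton.1 hs
  obtain ⟨z, hz⟩ : ∃ z : L, ⁅x, z⁆ ≠ 0 := by
    by_contra! h
    exact hx (LinearMap.ext h)
  have ht : t • ⁅x, z⁆ = 0 := by
    simpa [add_lie, smul_lie, lie_eq_zero_of_mem_range_ad h2 hr] using hc z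
  rw [(smul_eq_zero.1 ht).resolve_right hz, zero_smul, add_zero]
  exact hr

end TwoStep

/-- Every (2p+1)-dimensional 2-step nilpotent Lie algebra with characteristic
sequence (2,...,2,1) (p twos; equivalently, some ad(X) has rank p) admits a basis
in which the only possibly nonzero brackets are [X₁,X_{2i}] = X_{2i+1} and
[X_{2i},X_{2j}] = Σ_k a_{2i,2j}^{2k+1} X_{2k+1}. -/
theorem stmt_6 (K : Type*) (L : Type*) [Field K]
    [LieRing L] [LieAlgebra K L] [Module.Finite K L]
    (p : ℕ) (hp : 1 ≤ p)
    (h2step : ∀ x y z : L, ⁅⁅x, y⁆, z⁆ = 0)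
    (hdim : Module.finrank K L = 2 * p + 1)
    (hcs : ∃ x : L, Module.finrank K (LinearMap.range ((LieAlgebra.ad K L) x)) = p) :
    ∃ (B : Module.Basis (Fin (2 * p + 1)) K L) (a : Fin p → Fin p → Fin p → K),
      (∀ i : Fin p, ⁅B ⟨0, by omega⟩, B ⟨2 * i.1 + 1, by have := i.2; omega⟩⁆
          = B ⟨2 * i.1 + 2, by have := i.2; omega⟩) ∧
      (∀ i : Fin p, ⁅B ⟨0, by omega⟩, B ⟨2 * i.1 + 2, by have := i.2; omega⟩⁆ = 0) ∧
      (∀ i j : Fin p, ⁅B ⟨2 * i.1 + 1, by have := i.2; omega⟩,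
            B ⟨2 * j.1 + 1, by have := j.2; omega⟩⁆
          = ∑ k : Fin p, a i j k • B ⟨2 * k.1 + 2, by have := k.2; omega⟩) ∧
      (∀ i : Fin p, ∀ x : L, ⁅B ⟨2 * i.1 + 2, by have := i.2; omega⟩, x⁆ = 0) := by
  obtain ⟨x, hx⟩ := hcs
  set f := LieAlgebra.ad K L x
  have hf : f ≠ 0 := by
    rintro hf
    rw [hf, LinearMap.range_zero, finrank_bot] at hx
    omega
  have hker : ker f = range f ⊔ K ∙ x := by
    have hdimker : finrank K (ker f) = finrank K (range f) + 1 := by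
      have := finrank_range_add_finrank_ker f
      omega
    exact ker_ad_eq_range_sup_span h2step hf hdimker
  obtain ⟨Z, hZ⟩ := exists_fin_span_range_eq hx
  have hZf (k : Fin p) : Z k ∈ range f := hZ ▸ subset_span (Set.mem_range_self k)
  choose Y hY using fun k => hZf k
  have hspan := top_le_span_range_interleaveFamily x Y Z (hZ ▸ hker.le) hZ.ge hY
  have hYY (i j : Fin p) : ⁅Y i, Y j⁆ ∈ span K (Set.range Z) :=
    hZ ▸ mem_range_ad_of_forall_lie_eq_zero h2step hf hker.le (h2step (Y i) (Y j))
  choose a ha using fun i j => (mem_span_range_iff_exists_fun K).1 (hYY i j)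
  let B := basisOfTopLeSpanOfCardEqFinrank _ hspan (by rw [Fintype.card_fin, hdim])
  refine ⟨B, a, fun i => ?_, fun i => ?_, fun i j => ?_, fun i v => ?_⟩ <;>
    simp only [B, coe_basisOfTopLeSpanOfCardEqFinrank, interleaveFamily_zero,
      interleaveFamily_odd, interleaveFamily_even]
  · exact hY i
  · exact range_ad_le_ker_ad h2step x (hZf i)
  · exact (ha i j).symm
  · exact lie_eq_zero_of_mem_range_ad h2step (hZf i) v
end

section
/- Let h_{2p+1} be the (2p+1)-dimensional Heisenberg Lie algebra over a field of characteristic 0 with basis {X_1,...,X_{2p+1}} and brackets [X_{2i−1}, X_{2i}] = X_{2p+1} for 1 ≤ i ≤ p. Then the space Z of skew-symmetric bilinear maps φ : h × h → h satisfying φ(μ(X,Y),Z) + μ(φ(X,Y),Z) = 0 for all X,Y,Z (where μ is the Lie bracket) has dimension p(2p+1). -/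
/-!
Suppose the derived algebra and the centre of `L` are both the line `K z`, and write
`⁅x, y⁆ = ω(x, y) z` and `z = ⁅a, b⁆`. The cocycle identity gives
`⁅x, φ(y, w)⁆ = -ω(y, w) φ(x, z)`, so `φ(y, w) - ω(y, w) φ(a, b)` is central; it follows that `φ`
is determined by `ζ ∘ φ` for any functional `ζ` with `ζ z = 1`. Conversely, every alternating
form `S` is `ζ ∘ φ` for `φ(x, y) = ω(x, y) u + S(x, y) z`, where `⁅u, x⁆ = S(x, z) z` and `ζ u = 0`;
such a `u` exists because `u ↦ ζ ⁅u, ·⁆` has kernel `K z`, hence maps onto the functionals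
vanishing at `z`. Thus `φ ↦ ζ ∘ φ` identifies `Z²_CH` with the alternating bilinear forms on `L`,
of dimension `C(2p + 1, 2) = p(2p + 1)` for `h_{2p+1}`.
-/

/-- The space Z²_CH of skew-symmetric bilinear 2-cocycles φ for the CH-coboundary
δ²φ(X,Y,Z) = [X, φ(Y,Z)] + φ(X,[Y,Z]) on a Lie algebra L. -/
def chTwoCocycles (K : Type*) (L : Type*) [Field K] [LieRing L] [LieAlgebra K L] :
    Submodule K (L →ₗ[K] L →ₗ[K] L) where
  carrier := {φ | (∀ x y : L, φ x y = -φ y x) ∧ ∀ x y z : L, ⁅x, φ y z⁆ + φ x ⁅y, z⁆ = 0}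
  add_mem' := by
    rintro a b ⟨ha1, ha2⟩ ⟨hb1, hb2⟩
    constructor
    · intro x y
      simp only [LinearMap.add_apply]
      rw [ha1 x y, hb1 x y]
      abel
    · intro x y z
      simp only [LinearMap.add_apply, lie_add]
      have h : (⁅x, a y z⁆ + a x ⁅y, z⁆) + (⁅x, b y z⁆ + b x ⁅y, z⁆) = 0 := by
        rw [ha2 x y z, hb2 x y z, add_zero]
      rw [← h]
      abel
  zero_mem' := by
    refine ⟨fun x y => by simp, fun x y z => by simp⟩
  smul_mem' := by
    rintro c a ⟨ha1, ha2⟩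
    constructor
    · intro x y
      simp only [LinearMap.smul_apply]
      rw [ha1 x y, smul_neg]
    · intro x y z
      simp only [LinearMap.smul_apply, lie_smul]
      rw [← smul_add, ha2 x y z, smul_zero]

lemma eq_smul_of_mem_span_singleton {R M : Type*} [CommSemiring R] [AddCommMonoid M] [Module R M]
    {z v : M} {ζ : Module.Dual R M} (hζ : ζ z = 1) (hv : v ∈ R ∙ z) : v = ζ v • z := by
  obtain ⟨c, rfl⟩ := Submodule.mem_span_singleton.mp hv
  simp [hζ]

lemma lie_mem_of_basis {ι R L : Type*} [CommRing R] [LieRing L] [LieAlgebra R L]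
    (B : Module.Basis ι R L) {N : Submodule R L} (h : ∀ i j, ⁅B i, B j⁆ ∈ N) (x y : L) :
    ⁅x, y⁆ ∈ N := by
  have hzero : (LieAlgebra.ad R L : L →ₗ[R] Module.End R L).compr₂ N.mkQ = 0 :=
    B.ext fun i => B.ext fun j => by simpa [Submodule.Quotient.mk_eq_zero] using h i j
  simpa [Submodule.Quotient.mk_eq_zero] using LinearMap.congr_fun₂ hzero x y

lemma exists_lie_eq_smul_of_apply_eq_zero {K L : Type*} [Field K] [LieRing L] [LieAlgebra K L]
    [FiniteDimensional K L] {z : L} {ζ : Module.Dual K L} (hζ : ζ z = 1)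
    (hder : ∀ x y : L, ⁅x, y⁆ ∈ K ∙ z) (hz : ∀ x : L, ⁅x, z⁆ = 0)
    (hcenter : ∀ v : L, (∀ x : L, ⁅x, v⁆ = 0) → v ∈ K ∙ z) {f : Module.Dual K L} (hf : f z = 0) :
    ∃ u : L, ∀ x, ⁅u, x⁆ = f x • z := by
  set T : L →ₗ[K] Module.Dual K L := (LieAlgebra.ad K L : L →ₗ[K] Module.End K L).compr₂ ζ
  have hT : ∀ u x, T u x = ζ ⁅u, x⁆ := fun _ _ => rfl
  have hrange : LinearMap.range T ≤ (K ∙ z).dualAnnihilator := by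
    rintro _ ⟨u, rfl⟩
    rw [Submodule.mem_dualAnnihilator]
    intro w hw
    obtain ⟨c, rfl⟩ := Submodule.mem_span_singleton.mp hw
    rw [map_smul, hT, hz, map_zero, smul_zero]
  have hker : LinearMap.ker T ≤ K ∙ z := fun u hu => hcenter u fun x => by
    rw [← lie_skew, eq_smul_of_mem_span_singleton hζ (hder u x), ← hT, hu]
    simp
  have hrange_eq : LinearMap.range T = (K ∙ z).dualAnnihilator := by
    refine Submodule.eq_of_le_of_finrank_le hrange ?_
    have := Submodule.finrank_mono hker
    have := LinearMap.finrank_range_add_finrank_ker T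
    have := Subspace.finrank_add_finrank_dualAnnihilator_eq (K ∙ z)
    omega
  have hf' : f ∈ LinearMap.range T := by
    rw [hrange_eq, Submodule.mem_dualAnnihilator]
    intro w hw
    obtain ⟨c, rfl⟩ := Submodule.mem_span_singleton.mp hw
    rw [map_smul, hf, smul_zero]
  obtain ⟨u, rfl⟩ := hf'
  exact ⟨u, fun x => eq_smul_of_mem_span_singleton hζ (hder u x)⟩

namespace AlternatingMap

variable {R M N : Type*} [CommRing R] [AddCommGroup M] [Module R M] [AddCommGroup N] [Module R N]

def toBilin (f : M [⋀^Fin 2]→ₗ[R] N) : M →ₗ[R] M →ₗ[R] N :=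
  LinearMap.mk₂ R (fun x y => f ![x, y])
    (fun x x' y => f.map_vecCons_add ![y] x x')
    (fun c x y => f.map_vecCons_smul ![y] c x)
    (fun x y y' => (f.curryLeft x).map_vecCons_add ![] y y')
    (fun c x y => (f.curryLeft x).map_vecCons_smul ![] c y)

@[simp] lemma toBilin_apply (f : M [⋀^Fin 2]→ₗ[R] N) (x y : M) : f.toBilin x y = f ![x, y] := rfl

lemma toBilin_isAlt (f : M [⋀^Fin 2]→ₗ[R] N) : f.toBilin.IsAlt := fun x =>
  f.map_eq_zero_of_eq ![x, x] (i := 0) (j := 1) rfl zero_ne_one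

def ofBilin (f : M →ₗ[R] M →ₗ[R] N) (hf : f.IsAlt) : M [⋀^Fin 2]→ₗ[R] N where
  toFun v := f (v 0) (v 1)
  map_update_add' v i x y := by fin_cases i <;> simp
  map_update_smul' v i c x := by fin_cases i <;> simp
  map_eq_zero_of_eq' v i j hij hne := by
    fin_cases i <;> fin_cases j <;> simp_all [hf _]

@[simp] lemma ofBilin_apply (f : M →ₗ[R] M →ₗ[R] N) (hf : f.IsAlt) (v : Fin 2 → M) :
    ofBilin f hf v = f (v 0) (v 1) := rfl

lemma ofBilin_toBilin (f : M [⋀^Fin 2]→ₗ[R] N) : ofBilin f.toBilin f.toBilin_isAlt = f := by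
  ext v
  simp only [ofBilin_apply, toBilin_apply]
  congr 1
  ext i
  fin_cases i <;> rfl

end AlternatingMap

namespace chTwoCocycles

variable {K L : Type*} [Field K] [LieRing L] [LieAlgebra K L]

lemma apply_self [NeZero (2 : K)] {φ : L →ₗ[K] L →ₗ[K] L} (hφ : φ ∈ chTwoCocycles K L) (x : L) :
    φ x x = 0 := by
  have h2 : (2 : K) • φ x x = 0 := by
    rw [two_smul]
    nth_rewrite 1 [hφ.1 x x]
    exact neg_add_cancel _
  exact (smul_eq_zero.mp h2).resolve_left two_ne_zero

lemma isAlt_compr₂ [NeZero (2 : K)] {M : Type*} [AddCommGroup M] [Module K M]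
    {φ : L →ₗ[K] L →ₗ[K] L} (hφ : φ ∈ chTwoCocycles K L) (f : L →ₗ[K] M) : (φ.compr₂ f).IsAlt :=
  fun x => by rw [LinearMap.compr₂_apply, apply_self hφ, map_zero]

def toAlternatingMap [NeZero (2 : K)] (ζ : Module.Dual K L) :
    chTwoCocycles K L →ₗ[K] L [⋀^Fin 2]→ₗ[K] K where
  toFun φ := AlternatingMap.ofBilin (φ.1.compr₂ ζ) (isAlt_compr₂ φ.2 ζ)
  map_add' _ _ := by ext; simp
  map_smul' _ _ := by ext; simp

@[simp] lemma toAlternatingMap_apply [NeZero (2 : K)] (ζ : Module.Dual K L)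
    (φ : chTwoCocycles K L) (v : Fin 2 → L) : toAlternatingMap ζ φ v = ζ (φ.1 (v 0) (v 1)) := rfl

lemma lie_sub_smul_eq_zero {φ : L →ₗ[K] L →ₗ[K] L} (hφ : φ ∈ chTwoCocycles K L) {a b y w : L}
    {c : K} (hyw : ⁅y, w⁆ = c • ⁅a, b⁆) (x : L) : ⁅x, φ y w - c • φ a b⁆ = 0 := by
  have h₁ := hφ.2 x y w
  have h₂ := hφ.2 x a b
  rw [hyw, map_smul] at h₁
  rw [lie_sub, lie_smul]
  linear_combination (norm := module) h₁ - c • h₂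

variable {z : L} {ζ : Module.Dual K L}

lemma eq_zero_of_compr₂_eq_zero (hζ : ζ z = 1) (hder : ∀ x y : L, ⁅x, y⁆ ∈ K ∙ z)
    (hz : ∀ x : L, ⁅x, z⁆ = 0) (hcenter : ∀ v : L, (∀ x : L, ⁅x, v⁆ = 0) → v ∈ K ∙ z)
    {a b : L} (hab : ⁅a, b⁆ = z) {φ : L →ₗ[K] L →ₗ[K] L} (hφ : φ ∈ chTwoCocycles K L)
    (h : φ.compr₂ ζ = 0) : φ = 0 := by
  have hζφ : ∀ x y, ζ (φ x y) = 0 := fun x y => by simpa using LinearMap.congr_fun₂ h x y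
  have central_eq_zero : ∀ v, (∀ x, ⁅x, v⁆ = 0) → ζ v = 0 → v = 0 := fun v hv hζv => by
    rw [eq_smul_of_mem_span_singleton hζ (hcenter v hv), hζv, zero_smul]
  have hyw : ∀ y w : L, ⁅y, w⁆ = ζ ⁅y, w⁆ • ⁅a, b⁆ := fun y w => by
    rw [hab]; exact eq_smul_of_mem_span_singleton hζ (hder y w)
  have hmul : ∀ y w, φ y w = ζ ⁅y, w⁆ • φ a b := fun y w =>
    sub_eq_zero.mp <| central_eq_zero _ (lie_sub_smul_eq_zero hφ (hyw y w)) (by simp [hζφ])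
  have hz0 : ∀ x, φ x z = 0 := fun x => by rw [hmul, hz, map_zero, zero_smul]
  have hab0 : φ a b = 0 := central_eq_zero _ (fun x => by
    rw [← neg_eq_zero, add_eq_zero_iff_neg_eq.mp (hφ.2 x a b), hab, hz0]) (hζφ a b)
  ext x y
  rw [hmul, hab0, smul_zero, LinearMap.zero_apply, LinearMap.zero_apply]

lemma exists_compr₂_eq [FiniteDimensional K L] (hζ : ζ z = 1)
    (hder : ∀ x y : L, ⁅x, y⁆ ∈ K ∙ z) (hz : ∀ x : L, ⁅x, z⁆ = 0)
    (hcenter : ∀ v : L, (∀ x : L, ⁅x, v⁆ = 0) → v ∈ K ∙ z)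
    {S : L →ₗ[K] L →ₗ[K] K} (hS : S.IsAlt) :
    ∃ φ ∈ chTwoCocycles K L, φ.compr₂ ζ = S := by
  obtain ⟨u, hu⟩ := exists_lie_eq_smul_of_apply_eq_zero hζ hder hz hcenter (f := S.flip z) (hS z)
  set u₀ := u - ζ u • z
  have hu₀ : ∀ x, ⁅x, u₀⁆ = -(S x z • z) := fun x => by
    rw [lie_sub, lie_smul, hz, smul_zero, sub_zero, ← lie_skew, hu, LinearMap.flip_apply]
  have hbr : ∀ x y : L, ⁅x, y⁆ = ζ ⁅x, y⁆ • z := fun x y =>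
    eq_smul_of_mem_span_singleton hζ (hder x y)
  set ω : L →ₗ[K] L →ₗ[K] K := (LieAlgebra.ad K L : L →ₗ[K] Module.End K L).compr₂ ζ
  have hω : ∀ x y, ω x y = ζ ⁅x, y⁆ := fun _ _ => rfl
  refine ⟨ω.compr₂ (LinearMap.toSpanSingleton K L u₀) + S.compr₂ (LinearMap.toSpanSingleton K L z),
    ⟨fun x y => ?_, fun x y w => ?_⟩, LinearMap.ext₂ fun x y => ?_⟩
  · simp only [LinearMap.add_apply, LinearMap.compr₂_apply, LinearMap.toSpanSingleton_apply, hω]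
    rw [← lie_skew, map_neg, ← hS.neg]
    module
  · simp only [LinearMap.add_apply, LinearMap.compr₂_apply, LinearMap.toSpanSingleton_apply, hω]
    rw [hbr y w]
    simp only [lie_add, lie_smul, hu₀, hz, map_smul, map_zero, hζ]
    module
  · simp [hω, u₀, hζ]

theorem finrank_eq_choose_two [NeZero (2 : K)] [FiniteDimensional K L] (hζ : ζ z = 1)
    (hder : ∀ x y : L, ⁅x, y⁆ ∈ K ∙ z) (hz : ∀ x : L, ⁅x, z⁆ = 0)
    (hcenter : ∀ v : L, (∀ x : L, ⁅x, v⁆ = 0) → v ∈ K ∙ z) {a b : L} (hab : ⁅a, b⁆ = z) :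
    Module.finrank K (chTwoCocycles K L) = (Module.finrank K L).choose 2 := by
  have hinj : Function.Injective (toAlternatingMap (K := K) ζ) :=
    (injective_iff_map_eq_zero _).mpr fun φ hφ => Subtype.ext <|
      eq_zero_of_compr₂_eq_zero hζ hder hz hcenter hab φ.2 <|
        LinearMap.ext₂ fun x y => by simpa using DFunLike.congr_fun hφ ![x, y]
  have hsurj : Function.Surjective (toAlternatingMap (K := K) ζ) := by
    intro S
    obtain ⟨φ, hφ, hφS⟩ := exists_compr₂_eq hζ hder hz hcenter S.toBilin_isAlt
    refine ⟨⟨φ, hφ⟩, ?_⟩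
    rw [← S.ofBilin_toBilin]
    ext v
    simp [← hφS]
  rw [(LinearEquiv.ofBijective _ ⟨hinj, hsurj⟩).finrank_eq,
    exteriorPower.alternatingMapLinearEquiv.finrank_eq, Subspace.dual_finrank_eq,
    exteriorPower.finrank_eq]

end chTwoCocycles

section Heisenberg

variable {K L : Type*} [Field K] [LieRing L] [LieAlgebra K L] {p : ℕ}

-- Indices are 0-based: `B ⟨2 * i⟩`, `B ⟨2 * i + 1⟩` and `B (Fin.last _)` are the paper's
-- `X_{2i+1}`, `X_{2i+2}` and `X_{2p+1}`.
def IsHeisenbergBasis (B : Module.Basis (Fin (2 * p + 1)) K L) : Prop :=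
  (∀ i : Fin p, ⁅B ⟨2 * i.1, by omega⟩, B ⟨2 * i.1 + 1, by omega⟩⁆ = B (Fin.last (2 * p))) ∧
    ∀ i j : Fin (2 * p + 1), (∀ k : Fin p, ¬(i.1 = 2 * k.1 ∧ j.1 = 2 * k.1 + 1) ∧
      ¬(j.1 = 2 * k.1 ∧ i.1 = 2 * k.1 + 1)) → ⁅B i, B j⁆ = 0

namespace IsHeisenbergBasis

variable {B : Module.Basis (Fin (2 * p + 1)) K L}

lemma lie_mem_span_last (hB : IsHeisenbergBasis B) (x y : L) :
    ⁅x, y⁆ ∈ K ∙ B (Fin.last (2 * p)) := by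
  refine lie_mem_of_basis B (fun i j => ?_) x y
  by_cases h : ∀ k : Fin p, ¬(i.1 = 2 * k.1 ∧ j.1 = 2 * k.1 + 1) ∧
      ¬(j.1 = 2 * k.1 ∧ i.1 = 2 * k.1 + 1)
  · rw [hB.2 i j h]
    exact zero_mem _
  obtain ⟨k, hk⟩ := not_forall.mp h
  obtain ⟨hi, hj⟩ | ⟨hj, hi⟩ := (not_and_or.mp hk).imp not_not.mp not_not.mp
  · rw [show i = ⟨2 * k.1, by omega⟩ from Fin.ext hi,
      show j = ⟨2 * k.1 + 1, by omega⟩ from Fin.ext hj, hB.1 k]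
    exact Submodule.mem_span_singleton_self _
  · rw [show i = ⟨2 * k.1 + 1, by omega⟩ from Fin.ext hi,
      show j = ⟨2 * k.1, by omega⟩ from Fin.ext hj, ← lie_skew, hB.1 k]
    exact neg_mem (Submodule.mem_span_singleton_self _)

lemma lie_last (hB : IsHeisenbergBasis B) (x : L) : ⁅x, B (Fin.last (2 * p))⁆ = 0 := by
  have h : (LieAlgebra.ad K L : L →ₗ[K] Module.End K L).flip (B (Fin.last (2 * p))) = 0 :=
    B.ext fun i => hB.2 i _ fun k => by simp only [Fin.val_last]; omega
  exact LinearMap.congr_fun h x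

lemma coord_last_lie_even (hB : IsHeisenbergBasis B) (k : Fin p) (v : L) :
    B.coord (Fin.last (2 * p)) ⁅B ⟨2 * k.1, by omega⟩, v⁆ = B.repr v ⟨2 * k.1 + 1, by omega⟩ := by
  have h : (B.coord (Fin.last (2 * p))).comp (LieAlgebra.ad K L (B ⟨2 * k.1, by omega⟩)) =
      B.coord ⟨2 * k.1 + 1, by omega⟩ := by
    refine B.ext fun j => ?_
    simp only [LinearMap.comp_apply, LieAlgebra.ad_apply, Module.Basis.coord_apply,
      Module.Basis.repr_self]
    by_cases hj : j.1 = 2 * k.1 + 1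
    · rw [show j = ⟨2 * k.1 + 1, by omega⟩ from Fin.ext hj, hB.1 k]
      simp
    · rw [hB.2 _ _ fun k' => by dsimp only; omega, map_zero, Finsupp.zero_apply,
        Finsupp.single_apply, if_neg (by rintro rfl; exact hj rfl)]
  exact LinearMap.congr_fun h v

lemma coord_last_lie_odd (hB : IsHeisenbergBasis B) (k : Fin p) (v : L) :
    B.coord (Fin.last (2 * p)) ⁅v, B ⟨2 * k.1 + 1, by omega⟩⁆ = B.repr v ⟨2 * k.1, by omega⟩ := by
  have h : (B.coord (Fin.last (2 * p))).comp
      ((LieAlgebra.ad K L : L →ₗ[K] Module.End K L).flip (B ⟨2 * k.1 + 1, by omega⟩)) =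
      B.coord ⟨2 * k.1, by omega⟩ := by
    refine B.ext fun j => ?_
    simp only [LinearMap.comp_apply, LinearMap.flip_apply, LieHom.coe_toLinearMap,
      LieAlgebra.ad_apply, Module.Basis.coord_apply, Module.Basis.repr_self]
    by_cases hj : j.1 = 2 * k.1
    · rw [show j = ⟨2 * k.1, by omega⟩ from Fin.ext hj, hB.1 k]
      simp
    · rw [hB.2 _ _ fun k' => by dsimp only; omega, map_zero, Finsupp.zero_apply,
        Finsupp.single_apply, if_neg (by rintro rfl; exact hj rfl)]
  exact LinearMap.congr_fun h v

lemma mem_span_last_of_forall_lie_eq_zero (hB : IsHeisenbergBasis B) {v : L}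
    (hv : ∀ x : L, ⁅x, v⁆ = 0) : v ∈ K ∙ B (Fin.last (2 * p)) := by
  have hrepr : ∀ j : Fin (2 * p), B.repr v j.castSucc = 0 := by
    intro j
    obtain ⟨m, hm | hm⟩ := Nat.even_or_odd' j.1
    · have hmp : m < p := by omega
      rw [show j.castSucc = ⟨2 * m, by omega⟩ from Fin.ext hm,
        ← coord_last_lie_odd hB ⟨m, hmp⟩, ← lie_skew, hv, neg_zero, map_zero]
    · have hmp : m < p := by omega
      rw [show j.castSucc = ⟨2 * m + 1, by omega⟩ from Fin.ext hm,
        ← coord_last_lie_even hB ⟨m, hmp⟩, hv, map_zero]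
  refine Submodule.mem_span_singleton.mpr ⟨B.repr v (Fin.last (2 * p)), B.ext_elem fun i => ?_⟩
  induction i using Fin.lastCases <;> simp [hrepr]

end IsHeisenbergBasis

end Heisenberg

/-- For the (2p+1)-dimensional Heisenberg algebra, the space of skew-symmetric
bilinear CH-2-cocycles has dimension p(2p+1). -/
theorem stmt_7 (K : Type*) (L : Type*) [Field K] [CharZero K]
    [LieRing L] [LieAlgebra K L] (p : ℕ) (hp : 1 ≤ p)
    (B : Module.Basis (Fin (2 * p + 1)) K L)
    (hb1 : ∀ i : Fin p, ⁅B ⟨2 * i.1, by have := i.2; omega⟩,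
        B ⟨2 * i.1 + 1, by have := i.2; omega⟩⁆ = B ⟨2 * p, by omega⟩)
    (hb2 : ∀ i j : Fin (2 * p + 1),
        (∀ k : Fin p, ¬(i.1 = 2 * k.1 ∧ j.1 = 2 * k.1 + 1) ∧
          ¬(j.1 = 2 * k.1 ∧ i.1 = 2 * k.1 + 1)) → ⁅B i, B j⁆ = 0) :
    Module.finrank K (chTwoCocycles K L) = p * (2 * p + 1) := by
  have hB : IsHeisenbergBasis B := ⟨hb1, hb2⟩
  have : FiniteDimensional K L := B.finiteDimensional_of_finite
  rw [chTwoCocycles.finrank_eq_choose_two (ζ := B.coord (Fin.last (2 * p))) (by simp)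
      hB.lie_mem_span_last hB.lie_last (fun v => hB.mem_span_last_of_forall_lie_eq_zero)
      (hB.1 ⟨0, hp⟩), Module.finrank_eq_card_basis B, Fintype.card_fin, Nat.choose_two_right,
    Nat.add_sub_cancel]
  exact Nat.div_eq_of_eq_mul_left two_pos (by ring)
end

section
/- Let g_{p,1} be the (2p+1)-dimensional Lie algebra over a field of characteristic 0 with basis {X_1,...,X_{2p+1}} and nonzero brackets [X_1, X_{2i}] = X_{2i+1} for 1 ≤ i ≤ p. For p = 2, every 5-dimensional 2-step nilpotent Lie algebra with characteristic sequence (2,2,1) is isomorphic to g_{2,1}. -/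
/-!
Pick `x` with `rank ad x = 2` and `y, z` with `⁅x, y⁆, ⁅x, z⁆` a basis of the image of `ad x`.
Since `L` is two-step nilpotent, every bracket is central, and bracketing a linear relation
among `x, y, ⁅x, y⁆, z, ⁅x, z⁆` first with `x` and then with `y` kills it, so these five vectors
form a basis. The same computation shows that the central element `⁅y, z⁆` is a combination
`c • ⁅x, y⁆ + e • ⁅x, z⁆`, and the shear `y ↦ y - e • x`, `z ↦ z + c • x` makes it vanish.
-/

open Module LieAlgebra

section CommRing

variable {R L : Type*} [CommRing R] [LieRing L] [LieAlgebra R L]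

theorem lie_lie_right_eq_zero (h2 : ∀ u v w : L, ⁅⁅u, v⁆, w⁆ = 0) (u v w : L) :
    ⁅u, ⁅v, w⁆⁆ = 0 := by
  rw [← lie_skew, h2, neg_zero]

theorem coeff_eq_zero_of_lie_eq_zero (h2 : ∀ u v w : L, ⁅⁅u, v⁆, w⁆ = 0) {x y z : L}
    (hind : LinearIndependent R ![⁅x, y⁆, ⁅x, z⁆]) {a b c d e : R}
    (hx : ⁅x, a • x + b • y + c • ⁅x, y⁆ + d • z + e • ⁅x, z⁆⁆ = 0)
    (hy : ⁅a • x + b • y + c • ⁅x, y⁆ + d • z + e • ⁅x, z⁆, y⁆ = 0) :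
    a = 0 ∧ b = 0 ∧ d = 0 := by
  obtain ⟨rfl, rfl⟩ : b = 0 ∧ d = 0 := LinearIndependent.pair_iff.mp hind b d <| by
    simpa only [lie_add, lie_smul, lie_self, lie_lie_right_eq_zero h2, smul_zero, add_zero,
      zero_add] using hx
  have ha : a • ⁅x, y⁆ + (0 : R) • ⁅x, z⁆ = 0 := by
    simpa only [add_lie, smul_lie, zero_smul, lie_self, h2, smul_zero, add_zero, zero_add] using hy
  exact ⟨(LinearIndependent.pair_iff.mp hind a 0 ha).1, rfl, rfl⟩

theorem linearIndependent_lie_frame (h2 : ∀ u v w : L, ⁅⁅u, v⁆, w⁆ = 0) {x y z : L}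
    (hind : LinearIndependent R ![⁅x, y⁆, ⁅x, z⁆]) :
    LinearIndependent R ![x, y, ⁅x, y⁆, z, ⁅x, z⁆] := by
  rw [Fintype.linearIndependent_iff]
  intro f hf
  simp only [Fin.sum_univ_five, Matrix.cons_val] at hf
  obtain ⟨hf0, hf1, hf3⟩ :=
    coeff_eq_zero_of_lie_eq_zero h2 hind (by rw [hf, lie_zero]) (by rw [hf, zero_lie])
  obtain ⟨hf2, hf4⟩ := LinearIndependent.pair_iff.mp hind (f 2) (f 4) <| by
    simpa only [hf0, hf1, hf3, zero_smul, zero_add, add_zero] using hf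
  intro i
  fin_cases i <;> assumption

theorem lie_shear_eq_zero {x y z : L} {c e : R} (hyz : ⁅y, z⁆ = c • ⁅x, y⁆ + e • ⁅x, z⁆) :
    ⁅y - e • x, z + c • x⁆ = 0 := by
  rw [← lie_skew x y] at hyz
  simp only [sub_lie, lie_add, lie_smul, smul_lie, lie_self, hyz]
  module

theorem lie_lie_frame_eq_zero (h2 : ∀ u v w : L, ⁅⁅u, v⁆, w⁆ = 0) {x y z : L}
    (hyz : ⁅y, z⁆ = 0) (i j : Fin 5) (h01 : (i, j) ≠ (0, 1)) (h10 : (i, j) ≠ (1, 0))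
    (h03 : (i, j) ≠ (0, 3)) (h30 : (i, j) ≠ (3, 0)) :
    ⁅![x, y, ⁅x, y⁆, z, ⁅x, z⁆] i, ![x, y, ⁅x, y⁆, z, ⁅x, z⁆] j⁆ = 0 := by
  have hzy : ⁅z, y⁆ = 0 := by rw [← lie_skew, hyz, neg_zero]
  fin_cases i <;> fin_cases j <;>
    simp_all [lie_lie_right_eq_zero h2]

end CommRing

section Field

variable {K L : Type*} [Field K] [LieRing L] [LieAlgebra K L]

theorem exists_linearIndependent_lie_of_finrank_range_ad_eq_two {x : L}
    (hx : finrank K (LinearMap.range (ad K L x)) = 2) :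
    ∃ y z : L, LinearIndependent K ![⁅x, y⁆, ⁅x, z⁆] := by
  have : Module.Finite K (LinearMap.range (ad K L x)) := Module.finite_of_finrank_eq_succ hx
  let b : Basis (Fin 2) K (LinearMap.range (ad K L x)) := finBasisOfFinrankEq K _ hx
  obtain ⟨y, hy⟩ := LinearMap.mem_range.mp (b 0).2
  obtain ⟨z, hz⟩ := LinearMap.mem_range.mp (b 1).2
  refine ⟨y, z, ?_⟩
  have hb : ![⁅x, y⁆, ⁅x, z⁆] = (LinearMap.range (ad K L x)).subtype ∘ b := by
    ext i
    fin_cases i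
    exacts [hy, hz]
  rw [hb]
  exact b.linearIndependent.map' _ (Submodule.ker_subtype _)

theorem exists_lie_eq_smul_add_smul (h2 : ∀ u v w : L, ⁅⁅u, v⁆, w⁆ = 0)
    (hdim : finrank K L = 5) {x y z : L} (hind : LinearIndependent K ![⁅x, y⁆, ⁅x, z⁆]) :
    ∃ c e : K, ⁅y, z⁆ = c • ⁅x, y⁆ + e • ⁅x, z⁆ := by
  let B := basisOfLinearIndependentOfCardEqFinrank (linearIndependent_lie_frame h2 hind)
    (by rw [Fintype.card_fin, hdim])
  have hw := B.sum_repr ⁅y, z⁆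
  generalize B.repr ⁅y, z⁆ = r at hw
  simp only [Fin.sum_univ_five, B, coe_basisOfLinearIndependentOfCardEqFinrank,
    Matrix.cons_val] at hw
  obtain ⟨h0, h1, h3⟩ := coeff_eq_zero_of_lie_eq_zero h2 hind
    (by rw [hw]; exact lie_lie_right_eq_zero h2 x y z) (by rw [hw]; exact h2 y z y)
  refine ⟨r 2, r 4, ?_⟩
  rw [← hw, h0, h1, h3]
  simp only [zero_smul, zero_add, add_zero]

end Field

theorem stmt_9_general (K : Type*) (L : Type*) [Field K]
    [LieRing L] [LieAlgebra K L]
    (h2step : ∀ x y z : L, ⁅⁅x, y⁆, z⁆ = 0)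
    (hdim : Module.finrank K L = 5)
    (hcs : ∃ x : L, Module.finrank K (LinearMap.range ((LieAlgebra.ad K L) x)) = 2) :
    ∃ B : Module.Basis (Fin 5) K L,
      ⁅B 0, B 1⁆ = B 2 ∧ ⁅B 0, B 3⁆ = B 4 ∧
      ∀ i j : Fin 5,
        (i, j) ≠ (0, 1) → (i, j) ≠ (1, 0) → (i, j) ≠ (0, 3) → (i, j) ≠ (3, 0) →
          ⁅B i, B j⁆ = 0 := by
  obtain ⟨x, hx⟩ := hcs
  obtain ⟨y, z, hind⟩ := exists_linearIndependent_lie_of_finrank_range_ad_eq_two hx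
  obtain ⟨c, e, hyz⟩ := exists_lie_eq_smul_add_smul h2step hdim hind
  have hxy : ⁅x, y - e • x⁆ = ⁅x, y⁆ := by simp
  have hxz : ⁅x, z + c • x⁆ = ⁅x, z⁆ := by simp
  have hind' : LinearIndependent K ![⁅x, y - e • x⁆, ⁅x, z + c • x⁆] := by rwa [hxy, hxz]
  refine ⟨basisOfLinearIndependentOfCardEqFinrank (linearIndependent_lie_frame h2step hind')
    (by rw [Fintype.card_fin, hdim]), ?_, ?_, ?_⟩
  · simp
  · simp
  · intro i j
    rw [coe_basisOfLinearIndependentOfCardEqFinrank]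
    exact lie_lie_frame_eq_zero h2step (lie_shear_eq_zero (x := x) hyz) i j

/-- Every 5-dimensional 2-step nilpotent Lie algebra with characteristic sequence
(2,2,1) (equivalently, some ad(X) has rank 2) is isomorphic to g_{2,1}, i.e.
admits a basis with only nonzero brackets [X₁,X₂] = X₃ and [X₁,X₄] = X₅. -/
theorem stmt_9 (K : Type*) (L : Type*) [Field K] [CharZero K] [IsAlgClosed K]
    [LieRing L] [LieAlgebra K L] [Module.Finite K L]
    (h2step : ∀ x y z : L, ⁅⁅x, y⁆, z⁆ = 0)
    (hdim : Module.finrank K L = 5)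
    (hcs : ∃ x : L, Module.finrank K (LinearMap.range ((LieAlgebra.ad K L) x)) = 2) :
    ∃ B : Module.Basis (Fin 5) K L,
      ⁅B 0, B 1⁆ = B 2 ∧ ⁅B 0, B 3⁆ = B 4 ∧
      ∀ i j : Fin 5,
        (i, j) ≠ (0, 1) → (i, j) ≠ (1, 0) → (i, j) ≠ (0, 3) → (i, j) ≠ (3, 0) →
          ⁅B i, B j⁆ = 0 :=
  stmt_9_general K L h2step hdim hcs
end

section
/- The generating functions g(x) = x + x²/2 and h(x) = Σ_{k≥1} d_k x^k / k! satisfy the functional equation g(−h(−x)) = x, where d_k counts the dimensions of the free commutative (magmatic commutative) operad: d_1=1, d_2=1, and d_{2k+1} = Σ_{i=1}^{k} C(2k+1,i) d_i d_{2k+1−i}, d_{2k} = Σ_{i=1}^{k−1} C(2k,i) d_i d_{2k−i} + (1/2) C(2k,k) d_k². -/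
lemma key_sum (d : ℕ → ℚ) (h0 : d 0 = 0)
    (hodd : ∀ k : ℕ, 1 ≤ k →
      d (2 * k + 1) = ∑ i ∈ Finset.Icc 1 k,
        (Nat.choose (2 * k + 1) i : ℚ) * d i * d (2 * k + 1 - i))
    (heven : ∀ k : ℕ, 1 ≤ k →
      d (2 * k) = ∑ i ∈ Finset.Icc 1 (k - 1),
          (Nat.choose (2 * k) i : ℚ) * d i * d (2 * k - i)
        + (1 / 2) * (Nat.choose (2 * k) k : ℚ) * d k ^ 2)
    (n : ℕ) (hn : 2 ≤ n) :
    ∑ i ∈ Finset.range (n + 1), (Nat.choose n i : ℚ) * d i * d (n - i) = 2 * d n := by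
  rcases Nat.even_or_odd n with ⟨k, hk⟩ | ⟨k, hk⟩
  · -- n = 2k
    have hk2 : n = 2 * k := by omega
    subst hk2
    have hk1 : 1 ≤ k := by omega
    set f : ℕ → ℚ := fun i => (Nat.choose (2 * k) i : ℚ) * d i * d (2 * k - i) with hf
    have hsym : ∀ i, i ≤ 2 * k → f (2 * k - i) = f i := by
      intro i hi
      simp only [hf]
      rw [Nat.choose_symm hi, Nat.sub_sub_self hi]
      ring
    have hf0 : f 0 = 0 := by simp [hf, h0]
    have hsplit : ∑ i ∈ Finset.range (2 * k + 1), f i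
        = (∑ i ∈ Finset.range k, f i + f k) + ∑ i ∈ Finset.Ico (k + 1) (2 * k + 1), f i := by
      rw [Finset.range_eq_Ico, ← Finset.sum_Ico_consecutive f (Nat.zero_le (k+1)) (by omega),
        ← Finset.range_eq_Ico, Finset.sum_range_succ]
    have hrefl : ∑ i ∈ Finset.Ico (k + 1) (2 * k + 1), f i = ∑ i ∈ Finset.range k, f i := by
      have := Finset.sum_Ico_reflect f 0 (m := k) (n := 2 * k) (by omega)
      rw [show 2 * k + 1 - k = k + 1 by omega, Nat.sub_zero, ← Finset.range_eq_Ico] at this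
      rw [← this, Finset.range_eq_Ico]
      exact Finset.sum_congr rfl (fun i hi => hsym i (by simp at hi; omega))
    have hlow : ∑ i ∈ Finset.range k, f i = ∑ i ∈ Finset.Icc 1 (k - 1), f i := by
      rw [show Finset.Icc 1 (k-1) = Finset.Ico 1 k by rw [← Finset.Ico_add_one_right_eq_Icc]; congr 1; omega,
        Finset.sum_Ico_eq_sum_range,
        show k = (k - 1) + 1 by omega, Finset.sum_range_succ' f]
      simp [hf0]
      exact Finset.sum_congr rfl (fun i _ => by rw [Nat.add_comm])
    have hd := heven k hk1
    have hfk : f k = (Nat.choose (2 * k) k : ℚ) * d k ^ 2 := by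
      simp only [hf]; rw [show 2 * k - k = k by omega]; ring
    rw [hsplit, hrefl, hlow, hfk, hd]
    simp only [hf]
    ring
  · -- n = 2k+1
    subst hk
    have hk1 : 1 ≤ k := by omega
    set f : ℕ → ℚ := fun i => (Nat.choose (2 * k + 1) i : ℚ) * d i * d (2 * k + 1 - i) with hf
    have hsym : ∀ i, i ≤ 2 * k + 1 → f (2 * k + 1 - i) = f i := by
      intro i hi
      simp only [hf]
      rw [Nat.choose_symm hi, Nat.sub_sub_self hi]
      ring
    have hf0 : f 0 = 0 := by simp [hf, h0]
    have hsplit : ∑ i ∈ Finset.range (2 * k + 1 + 1), f i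
        = ∑ i ∈ Finset.range (k + 1), f i + ∑ i ∈ Finset.Ico (k + 1) (2 * k + 1 + 1), f i := by
      rw [Finset.range_eq_Ico, ← Finset.sum_Ico_consecutive f (Nat.zero_le (k+1)) (by omega),
        ← Finset.range_eq_Ico]
    have hrefl : ∑ i ∈ Finset.Ico (k + 1) (2 * k + 1 + 1), f i
        = ∑ i ∈ Finset.range (k + 1), f i := by
      have := Finset.sum_Ico_reflect f 0 (m := k + 1) (n := 2 * k + 1) (by omega)
      rw [show 2 * k + 1 + 1 - (k + 1) = k + 1 by omega, Nat.sub_zero,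
        ← Finset.range_eq_Ico] at this
      rw [← this, Finset.range_eq_Ico]
      exact Finset.sum_congr rfl (fun i hi => hsym i (by simp at hi; omega))
    have hlow : ∑ i ∈ Finset.range (k + 1), f i = ∑ i ∈ Finset.Icc 1 k, f i := by
      rw [show Finset.Icc 1 k = Finset.Ico 1 (k + 1) by rw [Finset.Ico_add_one_right_eq_Icc],
        Finset.sum_Ico_eq_sum_range, Nat.add_sub_cancel, Finset.sum_range_succ' f]
      simp [hf0]
      exact Finset.sum_congr rfl (fun i _ => by rw [Nat.add_comm])
    have hd := hodd k hk1
    rw [hsplit, hrefl, hlow, hd]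
    simp only [hf]
    ring

open PowerSeries in
/-- With g(x) = x + x²/2 and h(x) = Σ_{k≥1} d_k x^k/k! the exponential generating
function of the dimensions d_k of the free commutative operad (defined by the
displayed recursions), the functional equation g(−h(−x)) = x holds, i.e.
−h(−x) + h(−x)²/2 = x as formal power series. -/
theorem stmt_16 (d : ℕ → ℚ) (h0 : d 0 = 0) (h1 : d 1 = 1)
    (hodd : ∀ k : ℕ, 1 ≤ k →
      d (2 * k + 1) = ∑ i ∈ Finset.Icc 1 k,
        (Nat.choose (2 * k + 1) i : ℚ) * d i * d (2 * k + 1 - i))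
    (heven : ∀ k : ℕ, 1 ≤ k →
      d (2 * k) = ∑ i ∈ Finset.Icc 1 (k - 1),
          (Nat.choose (2 * k) i : ℚ) * d i * d (2 * k - i)
        + (1 / 2) * (Nat.choose (2 * k) k : ℚ) * d k ^ 2) :
    -(PowerSeries.mk fun k => (-1 : ℚ) ^ k * d k / (Nat.factorial k : ℚ))
      + PowerSeries.C (R := ℚ) (1 / 2)
        * (PowerSeries.mk fun k => (-1 : ℚ) ^ k * d k / (Nat.factorial k : ℚ)) ^ 2
      = PowerSeries.X := by
  ext n
  rw [map_add, map_neg, PowerSeries.coeff_mk, sq, PowerSeries.coeff_C_mul,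
    PowerSeries.coeff_mul, Finset.Nat.sum_antidiagonal_eq_sum_range_succ_mk]
  simp only [PowerSeries.coeff_mk]
  rcases n with _ | _ | n
  · simp [h0]
  · rw [PowerSeries.coeff_one_X]
    rw [Finset.sum_range_succ, Finset.sum_range_one]
    norm_num [h0, h1]
  · have hstep : ∀ i ∈ Finset.range (n + 2 + 1),
        ((-1:ℚ) ^ i * d i / (Nat.factorial i : ℚ))
          * ((-1:ℚ) ^ (n + 2 - i) * d (n + 2 - i) / (Nat.factorial (n + 2 - i) : ℚ))
        = (-1:ℚ) ^ (n + 2) / (Nat.factorial (n + 2) : ℚ)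
            * ((Nat.choose (n + 2) i : ℚ) * d i * d (n + 2 - i)) := by
      intro i hi
      have hin : i ≤ n + 2 := by simp at hi; omega
      have hs : (-1:ℚ) ^ i * (-1:ℚ) ^ (n + 2 - i) = (-1:ℚ) ^ (n + 2) := by
        rw [← pow_add, Nat.add_sub_cancel' hin]
      have hc : ((Nat.choose (n + 2) i : ℚ)) * (Nat.factorial i : ℚ)
          * (Nat.factorial (n + 2 - i) : ℚ) = (Nat.factorial (n + 2) : ℚ) := by
        exact_mod_cast congrArg (Nat.cast : ℕ → ℚ)
          (Nat.choose_mul_factorial_mul_factorial hin)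
      have h1 : (Nat.factorial i : ℚ) ≠ 0 := Nat.cast_ne_zero.2 (Nat.factorial_ne_zero i)
      have h2 : (Nat.factorial (n + 2 - i) : ℚ) ≠ 0 :=
        Nat.cast_ne_zero.2 (Nat.factorial_ne_zero _)
      have h3 : (Nat.factorial (n + 2) : ℚ) ≠ 0 := Nat.cast_ne_zero.2 (Nat.factorial_ne_zero _)
      field_simp
      linear_combination (d i * d (n + 2 - i) * (Nat.factorial (n + 2) : ℚ)) * hs
        + ((-1:ℚ) ^ (n + 2) * d i * d (n + 2 - i) - 2 * (-1:ℚ) ^ n * d i * d (n + 2 - i)) * hc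
    rw [Finset.sum_congr rfl hstep, ← Finset.mul_sum,
      key_sum d h0 hodd heven (n + 2) (by omega), PowerSeries.coeff_X]
    rw [if_neg (by omega)]
    ring
end

section
/- Let g be a finite-dimensional Lie algebra over a field of characteristic 0 with bracket μ, and for a skew 4-linear map ψ and skew 2-linear map φ define δ²_R φ(X₁,...,X₄) = μ(μ(φ(X₁,X₂),X₃),X₄) + μ(φ(μ(X₁,X₂),X₃),X₄) + φ(μ(μ(X₁,X₂),X₃),X₄) and δ³_R ψ(X₁,...,X₅) = μ(ψ(X₁,X₂,X₃,X₄),X₅) − ψ(μ(X₁,X₂),X₃,X₄,X₅). For a linear map f : g → g define δ¹f(X,Y) = μ(f(X),Y) + μ(X,f(Y)) − f(μ(X,Y)). Then δ²_R(δ¹ f) = 0 for every linear map f, provided g is 3-step nilpotent. -/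
/-- On a 3-step nilpotent Lie algebra, δ²_R(δ¹f) = 0 for every linear map f,
where δ¹f(X,Y) = [f(X),Y] + [X,f(Y)] − f([X,Y]) and
δ²_R φ(X₁,X₂,X₃,X₄) = [[φ(X₁,X₂),X₃],X₄] + [φ([X₁,X₂],X₃),X₄] + φ([[X₁,X₂],X₃],X₄). -/
theorem stmt_18 (K : Type*) (L : Type*) [Field K] [CharZero K]
    [LieRing L] [LieAlgebra K L] [Module.Finite K L]
    (h3step : ∀ x y z t : L, ⁅⁅⁅x, y⁆, z⁆, t⁆ = 0)
    (f : L →ₗ[K] L) :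
    ∀ x₁ x₂ x₃ x₄ : L,
      ⁅⁅(⁅f x₁, x₂⁆ + ⁅x₁, f x₂⁆ - f ⁅x₁, x₂⁆), x₃⁆, x₄⁆
        + ⁅(⁅f ⁅x₁, x₂⁆, x₃⁆ + ⁅⁅x₁, x₂⁆, f x₃⁆ - f ⁅⁅x₁, x₂⁆, x₃⁆), x₄⁆
        + (⁅f ⁅⁅x₁, x₂⁆, x₃⁆, x₄⁆ + ⁅⁅⁅x₁, x₂⁆, x₃⁆, f x₄⁆ - f ⁅⁅⁅x₁, x₂⁆, x₃⁆, x₄⁆)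
        = 0 := by
  intro x₁ x₂ x₃ x₄
  simp only [sub_lie, add_lie, lie_sub, lie_add, h3step, map_zero, zero_sub, add_zero, zero_add, neg_add_cancel, sub_zero]
  abel
end
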